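/- Let x, y ∈ ℝ^n be probability vectors, both sorted in nonincreasing order, such that x majorizes y (i.e., ∑_{i=1}^{k} x_i ≥ ∑_{i=1}^{k} y_i for all k, with equality at k = n). Define p_i = x_i² + (1 − ‖x‖₂²)·x_i. Then p (after sorting nonincreasingly, which equals p itself since the map preserves the ordering) majorizes y: ∑_{i=1}^{k} p_i ≥ ∑_{i=1}^{k} y_i for all k ∈ {1,…,n}, and ∑_{i=1}^{n} p_i = 1. -/

import Mathlib

/-!
With `s = ∑_{i<k} x_i`, `q = ∑_{i<k} x_i²` and `q' = ∑_{i≥k} x_i²`, the prefix sum of `p` exceeds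
that of `x` by `q (1 - s) - q' s`. Since `1 - s` is the tail sum of `x`, this excess is
`∑_{i<k≤j} x_i x_j (x_i - x_j)`, which is nonnegative because `x` is nonincreasing. Majorization
`x ⪰ y` then carries the inequality over to `y`.
-/

open Finset

section

variable {ι R : Type*} [CommRing R]

def threeMajority [Fintype ι] (x : ι → R) (i : ι) : R :=
  x i ^ 2 + (1 - ∑ j, x j ^ 2) * x i

theorem sum_sq_mul_sum_sub_sum_mul_sum_sq (f : ι → R) (s t : Finset ι) :
    (∑ i ∈ s, f i ^ 2) * (∑ j ∈ t, f j) - (∑ i ∈ s, f i) * (∑ j ∈ t, f j ^ 2)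
      = ∑ i ∈ s, ∑ j ∈ t, f i * f j * (f i - f j) := by
  simp only [sum_mul_sum, ← sum_sub_distrib]
  exact sum_congr rfl fun i _ => sum_congr rfl fun j _ => by ring

theorem sum_mul_sum_sq_le_sum_sq_mul_sum [PartialOrder R] [IsOrderedRing R]
    {f : ι → R} (hf : ∀ i, 0 ≤ f i) {s t : Finset ι}
    (hst : ∀ i ∈ s, ∀ j ∈ t, f j ≤ f i) :
    (∑ i ∈ s, f i) * (∑ j ∈ t, f j ^ 2) ≤ (∑ i ∈ s, f i ^ 2) * (∑ j ∈ t, f j) := by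
  rw [← sub_nonneg, sum_sq_mul_sum_sub_sum_mul_sum_sq]
  exact sum_nonneg fun i hi => sum_nonneg fun j hj =>
    mul_nonneg (mul_nonneg (hf i) (hf j)) (sub_nonneg.mpr (hst i hi j hj))

variable [Fintype ι]

theorem sum_threeMajority {x : ι → R} (hx : ∑ i, x i = 1) : ∑ i, threeMajority x i = 1 := by
  simp only [threeMajority, sum_add_distrib, ← mul_sum, hx]
  ring

theorem sum_le_sum_threeMajority [PartialOrder R] [IsOrderedRing R] [DecidableEq ι]
    {x : ι → R} (hx : ∀ i, 0 ≤ x i) (hxsum : ∑ i, x i = 1) {s : Finset ι}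
    (hs : ∀ i ∈ s, ∀ j ∉ s, x j ≤ x i) :
    ∑ i ∈ s, x i ≤ ∑ i ∈ s, threeMajority x i := by
  have hsum : ∑ i ∈ s, x i + ∑ i ∈ sᶜ, x i = 1 := by rw [sum_add_sum_compl, hxsum]
  have hsq : ∑ i ∈ s, x i ^ 2 + ∑ i ∈ sᶜ, x i ^ 2 = ∑ i, x i ^ 2 := sum_add_sum_compl s _
  have hcross := sum_mul_sum_sq_le_sum_sq_mul_sum hx (s := s) (t := sᶜ)
    fun i hi j hj => hs i hi j (mem_compl.mp hj)
  have hp : ∑ i ∈ s, threeMajority x i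
      = ∑ i ∈ s, x i ^ 2 + (1 - ∑ j, x j ^ 2) * ∑ i ∈ s, x i := by
    simp only [threeMajority, sum_add_distrib, ← mul_sum]
  rw [hp, ← hsq]
  linear_combination hcross + (∑ i ∈ s, x i ^ 2) * hsum

end

theorem threeMajority_dominates_voter_general
    (n : ℕ) (x y : Fin n → ℝ)
    (hxnonneg : ∀ i, 0 ≤ x i) (hxsum : ∑ i, x i = 1)
    (hxsort : ∀ i j : Fin n, i ≤ j → x j ≤ x i)
    (hmaj : ∀ k : ℕ, k ≤ n →
      (∑ i ∈ Finset.univ.filter (fun i : Fin n => (i : ℕ) < k), y i)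
        ≤ ∑ i ∈ Finset.univ.filter (fun i : Fin n => (i : ℕ) < k), x i)
    (p : Fin n → ℝ)
    (hp : ∀ i, p i = (x i) ^ 2 + (1 - ∑ j, (x j) ^ 2) * x i) :
    (∀ k : ℕ, 1 ≤ k → k ≤ n →
      (∑ i ∈ Finset.univ.filter (fun i : Fin n => (i : ℕ) < k), y i)
        ≤ ∑ i ∈ Finset.univ.filter (fun i : Fin n => (i : ℕ) < k), p i)
    ∧ ∑ i, p i = 1 := by
  obtain rfl : p = threeMajority x := funext hp
  refine ⟨fun k _ hk => (hmaj k hk).trans (sum_le_sum_threeMajority hxnonneg hxsum ?_),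
    sum_threeMajority hxsum⟩
  intro i hi j hj
  simp only [mem_filter_univ, not_lt] at hi hj
  exact hxsort i j (Fin.le_def.mpr (hi.le.trans hj))

/-- protocol dominance of 3-Majority over Voter. If sorted probability
vectors x, y satisfy x ⪰ y (prefix-wise, with equality of total sums), and
p_i = x_i² + (1 − ‖x‖₂²)·x_i, then every prefix sum of p dominates that of y,
and ∑ p_i = 1. -/
theorem threeMajority_dominates_voter
    (n : ℕ) (x y : Fin n → ℝ)
    (hxnonneg : ∀ i, 0 ≤ x i) (hxsum : ∑ i, x i = 1)
    (hynonneg : ∀ i, 0 ≤ y i) (hysum : ∑ i, y i = 1)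
    (hxsort : ∀ i j : Fin n, i ≤ j → x j ≤ x i)
    (hysort : ∀ i j : Fin n, i ≤ j → y j ≤ y i)
    (hmaj : ∀ k : ℕ, k ≤ n →
      (∑ i ∈ Finset.univ.filter (fun i : Fin n => (i : ℕ) < k), y i)
        ≤ ∑ i ∈ Finset.univ.filter (fun i : Fin n => (i : ℕ) < k), x i)
    (p : Fin n → ℝ)
    (hp : ∀ i, p i = (x i) ^ 2 + (1 - ∑ j, (x j) ^ 2) * x i) :
    (∀ k : ℕ, 1 ≤ k → k ≤ n →
      (∑ i ∈ Finset.univ.filter (fun i : Fin n => (i : ℕ) < k), y i)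
        ≤ ∑ i ∈ Finset.univ.filter (fun i : Fin n => (i : ℕ) < k), p i)
    ∧ ∑ i, p i = 1 :=
  threeMajority_dominates_voter_general n x y hxnonneg hxsum hxsort hmaj p hp
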